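/- Let S and R be rings and T an (S,R)-bimodule. If S is left coherent, then for every injective right R-module I, the flat dimension of the right S-module Hom_R(T, I) is at most the injective dimension of T as a left S-module. -/

import Mathlib

open Function MulOpposite

universe u

noncomputable section

/-! ## Chain conditions -/

/-- A ring is right coherent if every finitely generated right ideal is finitely presented. -/
def IsRightCoherentRing (R : Type u) [Ring R] : Prop :=
  ∀ I : Submodule Rᵐᵒᵖ R, I.FG → Module.FinitePresentation Rᵐᵒᵖ I

/-- A ring is left coherent if every finitely generated left ideal is finitely presented. -/
def IsLeftCoherentRing (S : Type u) [Ring S] : Prop :=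
  ∀ I : Submodule S S, I.FG → Module.FinitePresentation S I

/-- A ring is right Noetherian if every right ideal is finitely generated. -/
def IsRightNoetherianRing (R : Type u) [Ring R] : Prop :=
  ∀ I : Submodule Rᵐᵒᵖ R, I.FG

/-! ## The tensor product `N ⊗_S T` of a right `S`-module `N` with a left `S`-module `T` -/

section MTensor

variable (S : Type u) [Ring S]
variable (N : Type u) [AddCommGroup N] [Module Sᵐᵒᵖ N]
variable (T : Type u) [AddCommGroup T] [Module S T]

/-- The subgroup of balancing relations defining `N ⊗_S T` as a quotient of `T ⊗_ℤ N`. -/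
def mtRel : AddSubgroup (TensorProduct ℤ T N) :=
  AddSubgroup.closure
    {x | ∃ (s : S) (t : T) (n : N), x = (s • t) ⊗ₜ[ℤ] n - t ⊗ₜ[ℤ] (op s • n)}

/-- `MTensor S N T` is the tensor product `N ⊗_S T` of a right `S`-module `N` with a left
`S`-module `T`, realized as a quotient of `T ⊗_ℤ N`. -/
def MTensor : Type u := TensorProduct ℤ T N ⧸ mtRel S N T

instance : AddCommGroup (MTensor S N T) :=
  inferInstanceAs (AddCommGroup (TensorProduct ℤ T N ⧸ mtRel S N T))

variable {S N T}

/-- `MTensor.mk n t` is the element `n ⊗ t` of `N ⊗_S T`. -/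
def MTensor.mk (n : N) (t : T) : MTensor S N T := QuotientAddGroup.mk (t ⊗ₜ[ℤ] n)

section Map

variable {N' : Type u} [AddCommGroup N'] [Module Sᵐᵒᵖ N']

/-- Functoriality of `N ⊗_S T` in the right `S`-module variable `N`. -/
def MTensor.map (g : N →ₗ[Sᵐᵒᵖ] N') : MTensor S N T →+ MTensor S N' T :=
  QuotientAddGroup.map _ _
    (LinearMap.lTensor T g.toAddMonoidHom.toIntLinearMap).toAddMonoidHom
    (by
      refine (AddSubgroup.closure_le _).2 ?_
      rintro x ⟨s, t, n, rfl⟩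
      simp only [SetLike.mem_coe, AddSubgroup.mem_comap, LinearMap.toAddMonoidHom_coe,
        map_sub, LinearMap.lTensor_tmul, AddMonoidHom.coe_toIntLinearMap,
        LinearMap.toAddMonoidHom_coe, map_smul]
      exact AddSubgroup.subset_closure ⟨s, t, g n, rfl⟩)

end Map

section LMap

variable {T' : Type u} [AddCommGroup T'] [Module S T']

/-- Functoriality of `N ⊗_S T` in the left `S`-module variable `T`. -/
def MTensor.lmap (h : T →ₗ[S] T') : MTensor S N T →+ MTensor S N T' :=
  QuotientAddGroup.map _ _
    (LinearMap.rTensor N h.toAddMonoidHom.toIntLinearMap).toAddMonoidHom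
    (by
      refine (AddSubgroup.closure_le _).2 ?_
      rintro x ⟨s, t, n, rfl⟩
      simp only [SetLike.mem_coe, AddSubgroup.mem_comap, LinearMap.toAddMonoidHom_coe,
        map_sub, LinearMap.rTensor_tmul, AddMonoidHom.coe_toIntLinearMap, map_smul]
      exact AddSubgroup.subset_closure ⟨s, h t, n, rfl⟩)

end LMap

section Bimod

variable (R : Type u) [Ring R] [Module Rᵐᵒᵖ T] [SMulCommClass S Rᵐᵒᵖ T]

instance MTensor.instSMul : SMul Rᵐᵒᵖ (MTensor S N T) :=
  ⟨fun ρ =>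
    QuotientAddGroup.map _ _ (DistribMulAction.toAddMonoidHom (TensorProduct ℤ T N) ρ)
      (by
        refine (AddSubgroup.closure_le _).2 ?_
        rintro x ⟨s, t, n, rfl⟩
        simp only [SetLike.mem_coe, AddSubgroup.mem_comap,
          DistribMulAction.toAddMonoidHom_apply, smul_sub, TensorProduct.smul_tmul']
        exact AddSubgroup.subset_closure ⟨s, ρ • t, n, by rw [smul_comm s ρ t]⟩)⟩

instance MTensor.instModule : Module Rᵐᵒᵖ (MTensor S N T) :=
  Function.Surjective.module Rᵐᵒᵖ (QuotientAddGroup.mk' (mtRel S N T))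
    (QuotientAddGroup.mk'_surjective _) (fun _ _ => rfl)

theorem MTensor.smul_mk (ρ : Rᵐᵒᵖ) (n : N) (t : T) :
    ρ • (MTensor.mk n t : MTensor S N T) = MTensor.mk n (ρ • t) := by
  show QuotientAddGroup.mk (ρ • (t ⊗ₜ[ℤ] n)) = QuotientAddGroup.mk ((ρ • t) ⊗ₜ[ℤ] n)
  rw [TensorProduct.smul_tmul']

theorem MTensor.mk_add_right (n : N) (t t' : T) :
    (MTensor.mk n (t + t') : MTensor S N T) = MTensor.mk n t + MTensor.mk n t' := by
  show QuotientAddGroup.mk _ = _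
  rw [TensorProduct.add_tmul]
  rfl

/-- The natural map `θ_N : N → Hom_R(T, N ⊗_S T)`, `n ↦ (t ↦ n ⊗ t)`. -/
def MTensor.theta (n : N) : T →ₗ[Rᵐᵒᵖ] MTensor S N T where
  toFun t := MTensor.mk n t
  map_add' t t' := MTensor.mk_add_right n t t'
  map_smul' ρ t := (MTensor.smul_mk R ρ n t).symm

variable (S T N) in
/-- The natural map `θ_N : N → Hom_R(T, N ⊗_S T)` as a function. -/
def MTensor.thetaFun : N → (T →ₗ[Rᵐᵒᵖ] MTensor S N T) := fun n => MTensor.theta R n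

end Bimod

end MTensor

/-! ## The right `S`-module structure on `Hom_A(T, M)` induced by a left `S`-action on `T` -/

section HomModule

variable {B A : Type u} [Ring B] [Ring A]
variable {T : Type u} [AddCommGroup T] [Module A T] [Module B T] [SMulCommClass B A T]
variable {M : Type u} [AddCommGroup M] [Module A M]

instance homDomSMul : SMul Bᵐᵒᵖ (T →ₗ[A] M) :=
  ⟨fun b f =>
    { toFun := fun t => f (b.unop • t)
      map_add' := fun t t' => by
        show f (b.unop • (t + t')) = f (b.unop • t) + f (b.unop • t')
        rw [smul_add, map_add]
      map_smul' := fun a t => by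
        show f (b.unop • a • t) = a • f (b.unop • t)
        rw [smul_comm b.unop a t, map_smul] }⟩

@[simp] theorem homDomSMul_apply (b : Bᵐᵒᵖ) (f : T →ₗ[A] M) (t : T) :
    (b • f) t = f (b.unop • t) := rfl

instance homDomModule : Module Bᵐᵒᵖ (T →ₗ[A] M) where
  one_smul f := LinearMap.ext fun t => by simp
  mul_smul b b' f := LinearMap.ext fun t => by simp [mul_smul]
  smul_zero b := LinearMap.ext fun t => rfl
  smul_add b f g := LinearMap.ext fun t => rfl
  add_smul b b' f := LinearMap.ext fun t => by simp [add_smul]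
  zero_smul f := LinearMap.ext fun t => by simp

end HomModule

/-! ## The evaluation map `ν_M : Hom_R(T, M) ⊗_S T → M` -/

section Nu

variable (S R : Type u) [Ring S] [Ring R]
variable (T : Type u) [AddCommGroup T] [Module S T] [Module Rᵐᵒᵖ T] [SMulCommClass S Rᵐᵒᵖ T]
variable (M : Type u) [AddCommGroup M] [Module Rᵐᵒᵖ M]

/-- The evaluation map `ν_M : Hom_R(T, M) ⊗_S T → M`, `f ⊗ t ↦ f t`. -/
def MTensor.nuFun : MTensor S (T →ₗ[Rᵐᵒᵖ] M) T →+ M :=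
  QuotientAddGroup.lift _
    (TensorProduct.liftAddHom
      { toFun := fun t =>
          { toFun := fun f : T →ₗ[Rᵐᵒᵖ] M => f t
            map_zero' := rfl
            map_add' := fun f g => rfl }
        map_zero' := AddMonoidHom.ext fun f => f.map_zero
        map_add' := fun t t' => AddMonoidHom.ext fun f => f.map_add t t' }
      (fun z t f => by
        show f (z • t) = (z • f) t
        rw [map_zsmul, LinearMap.smul_apply]))
    (by
      refine (AddSubgroup.closure_le _).2 ?_
      rintro x ⟨s, t, f, rfl⟩
      simp only [SetLike.mem_coe, AddMonoidHom.mem_ker, map_sub,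
        TensorProduct.liftAddHom_tmul, AddMonoidHom.coe_mk, ZeroHom.coe_mk]
      show f (s • t) - (op s • f) t = 0
      rw [homDomSMul_apply]
      simp)

end Nu


/-! ## Resolutions and derived-functor vanishing -/

/-- The data of a nonnegatively graded chain complex `⋯ → P 1 → P 0 → X` of `A`-modules. -/
structure ResolutionData (A : Type u) [Ring A] (X : Type u) [AddCommGroup X] [Module A X] :
    Type (u + 1) where
  P : ℕ → Type u
  [instAdd : ∀ n, AddCommGroup (P n)]
  [instMod : ∀ n, Module A (P n)]
  d : ∀ n, P (n + 1) →ₗ[A] P n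
  ε : P 0 →ₗ[A] X

attribute [instance] ResolutionData.instAdd ResolutionData.instMod

/-- The property of being a projective resolution. -/
structure ResolutionData.IsProjResolution {A : Type u} [Ring A] {X : Type u} [AddCommGroup X]
    [Module A X] (Q : ResolutionData A X) : Prop where
  proj : ∀ n, Module.Projective A (Q.P n)
  surj : Function.Surjective Q.ε
  exact0 : Function.Exact (Q.d 0) Q.ε
  exactSucc : ∀ n, Function.Exact (Q.d (n + 1)) (Q.d n)

/-- `X` has a resolution by finitely generated projective `A`-modules. -/
def HasFGProjResolution (A : Type u) [Ring A] (X : Type u) [AddCommGroup X] [Module A X] : Prop :=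
  ∃ Q : ResolutionData A X, Q.IsProjResolution ∧ ∀ n, Module.Finite A (Q.P n)

/-- `Ext^i_A(X, Y) = 0` for all `i ≥ 1`: some (equivalently, any) projective resolution of `X`
has `Hom_A(-, Y)`-complex exact at all positive degrees. -/
def ExtVanishAll (A : Type u) [Ring A] (X Y : Type u) [AddCommGroup X] [Module A X]
    [AddCommGroup Y] [Module A Y] : Prop :=
  ∃ Q : ResolutionData A X, Q.IsProjResolution ∧
    ∀ j : ℕ, Function.Exact
      (fun f : Q.P j →ₗ[A] Y => f.comp (Q.d j))
      (fun f : Q.P (j + 1) →ₗ[A] Y => f.comp (Q.d (j + 1)))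

/-- `Ext^1_A(X, Y) = 0`: every short exact sequence `0 → Y → E → X → 0` splits. -/
def Ext1Vanishes (A : Type u) [Ring A] (X Y : Type u) [AddCommGroup X] [Module A X]
    [AddCommGroup Y] [Module A Y] : Prop :=
  ∀ (E : Type u) [AddCommGroup E] [Module A E] (i : Y →ₗ[A] E) (p : E →ₗ[A] X),
    Function.Injective i → Function.Surjective p → Function.Exact i p →
      ∃ s : X →ₗ[A] E, p.comp s = LinearMap.id

/-- `Tor^S_i(N, T) = 0` for all `i ≥ 1`: some (equivalently, any) projective resolution of the
right `S`-module `N` stays exact in positive degrees after applying `- ⊗_S T`. -/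
def TorVanishAll (S : Type u) [Ring S] (N : Type u) [AddCommGroup N] [Module Sᵐᵒᵖ N]
    (T : Type u) [AddCommGroup T] [Module S T] : Prop :=
  ∃ Q : ResolutionData Sᵐᵒᵖ N, Q.IsProjResolution ∧
    ∀ j : ℕ, Function.Exact
      (⇑(MTensor.map (T := T) (Q.d (j + 1))))
      (⇑(MTensor.map (T := T) (Q.d j)))

/-! ## Homological dimensions -/

/-- A surjection onto `M` from some module. -/
structure EpiOnto (A : Type u) [Ring A] (M : ModuleCat.{u} A) : Type (u + 1) where
  P : ModuleCat.{u} A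
  f : P →ₗ[A] M
  surj : Function.Surjective f

/-- An injection of `M` into some module. -/
structure MonoInto (A : Type u) [Ring A] (M : ModuleCat.{u} A) : Type (u + 1) where
  E : ModuleCat.{u} A
  f : M →ₗ[A] E
  inj : Function.Injective f

/-- `HasClassResolution A 𝒞 n M` says that there is an exact sequence
`0 → C_n → ⋯ → C_0 → M → 0` with all `C_i` in the class `𝒞`. -/
def HasClassResolution (A : Type u) [Ring A] (C : ModuleCat.{u} A → Prop) :
    ℕ → ModuleCat.{u} A → Prop
  | 0, M => C M
  | n + 1, M => ∃ e : EpiOnto A M, C e.P ∧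
      HasClassResolution A C n (ModuleCat.of A (LinearMap.ker e.f))

/-- `HasClassCoresolution A 𝒞 n M` says that there is an exact sequence
`0 → M → C^0 → ⋯ → C^n → 0` with all `C^i` in the class `𝒞`. -/
def HasClassCoresolution (A : Type u) [Ring A] (C : ModuleCat.{u} A → Prop) :
    ℕ → ModuleCat.{u} A → Prop
  | 0, M => C M
  | n + 1, M => ∃ m : MonoInto A M, C m.E ∧
      HasClassCoresolution A C n (ModuleCat.of A ((↥m.E) ⧸ LinearMap.range m.f))

/-- The projective dimension of `M` is at most `n`. -/
def ProjDimLE (A : Type u) [Ring A] (M : Type u) [AddCommGroup M] [Module A M] (n : ℕ) : Prop :=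
  HasClassResolution A (fun P => Module.Projective A P) n (ModuleCat.of A M)

/-- The injective dimension of `M` is at most `n`. -/
def InjDimLE (A : Type u) [Ring A] (M : Type u) [AddCommGroup M] [Module A M] (n : ℕ) : Prop :=
  HasClassCoresolution A (fun E => Module.Injective A E) n (ModuleCat.of A M)

/-- A right `S`-module `N` is flat if `N ⊗_S -` preserves injections of left `S`-modules. -/
def IsFlatRightModule (S : Type u) [Ring S] (N : Type u) [AddCommGroup N] [Module Sᵐᵒᵖ N] :
    Prop :=
  ∀ (X Y : Type u) [AddCommGroup X] [Module S X] [AddCommGroup Y] [Module S Y]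
    (g : X →ₗ[S] Y), Function.Injective g →
      Function.Injective (MTensor.lmap (N := N) g)

/-- The flat dimension of the right `S`-module `N` is at most `n`. -/
def FlatDimLE (S : Type u) [Ring S] (N : Type u) [AddCommGroup N] [Module Sᵐᵒᵖ N] (n : ℕ) :
    Prop :=
  HasClassResolution Sᵐᵒᵖ (fun P => IsFlatRightModule S P) n (ModuleCat.of Sᵐᵒᵖ N)

/-! ## Gorenstein homological algebra -/

/-- The data of a `ℤ`-indexed complex of `A`-modules. -/
structure ZComplex (A : Type u) [Ring A] : Type (u + 1) where
  P : ℤ → Type u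
  [instAdd : ∀ i, AddCommGroup (P i)]
  [instMod : ∀ i, Module A (P i)]
  d : ∀ i, P i →ₗ[A] P (i + 1)

attribute [instance] ZComplex.instAdd ZComplex.instMod

/-- Exactness of a `ℤ`-indexed complex. -/
def ZComplex.IsExact {A : Type u} [Ring A] (C : ZComplex A) : Prop :=
  ∀ i, Function.Exact (C.d i) (C.d (i + 1))

/-- A module is Gorenstein projective if it is a kernel of a totally acyclic complex of
projective modules. -/
def IsGorensteinProjective (A : Type u) [Ring A] (N : Type u) [AddCommGroup N] [Module A N] :
    Prop :=
  ∃ C : ZComplex A, (∀ i, Module.Projective A (C.P i)) ∧ C.IsExact ∧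
    (∀ (Q : Type u) [AddCommGroup Q] [Module A Q], Module.Projective A Q →
      ∀ i, Function.Exact
        (fun f : C.P (i + 1 + 1) →ₗ[A] Q => f.comp (C.d (i + 1)))
        (fun f : C.P (i + 1) →ₗ[A] Q => f.comp (C.d i))) ∧
    Nonempty (N ≃ₗ[A] LinearMap.ker (C.d 0))

/-- A module is Gorenstein injective if it is a kernel of a totally acyclic complex of
injective modules. -/
def IsGorensteinInjective (A : Type u) [Ring A] (M : Type u) [AddCommGroup M] [Module A M] :
    Prop :=
  ∃ C : ZComplex A, (∀ i, Module.Injective A (C.P i)) ∧ C.IsExact ∧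
    (∀ (I : Type u) [AddCommGroup I] [Module A I], Module.Injective A I →
      ∀ i, Function.Exact
        (fun f : I →ₗ[A] C.P i => (C.d i).comp f)
        (fun f : I →ₗ[A] C.P (i + 1) => (C.d (i + 1)).comp f)) ∧
    Nonempty (M ≃ₗ[A] LinearMap.ker (C.d 0))

/-- A right `S`-module is Gorenstein flat if it is a kernel of a complex of flat right
`S`-modules which stays exact after tensoring with any injective left `S`-module. -/
def IsGorensteinFlat (S : Type u) [Ring S] (N : Type u) [AddCommGroup N] [Module Sᵐᵒᵖ N] :
    Prop :=
  ∃ C : ZComplex Sᵐᵒᵖ, (∀ i, IsFlatRightModule S (C.P i)) ∧ C.IsExact ∧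
    (∀ (I : Type u) [AddCommGroup I] [Module S I], Module.Injective S I →
      ∀ i, Function.Exact
        (⇑(MTensor.map (T := I) (C.d i)))
        (⇑(MTensor.map (T := I) (C.d (i + 1))))) ∧
    Nonempty (N ≃ₗ[Sᵐᵒᵖ] LinearMap.ker (C.d 0))

/-- The Gorenstein projective dimension of `N` is at most `n`. -/
def GpdLE (A : Type u) [Ring A] (N : Type u) [AddCommGroup N] [Module A N] (n : ℕ) : Prop :=
  HasClassResolution A (fun P => IsGorensteinProjective A P) n (ModuleCat.of A N)

/-- The Gorenstein flat dimension of the right `S`-module `N` is at most `n`. -/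
def GfdLE (S : Type u) [Ring S] (N : Type u) [AddCommGroup N] [Module Sᵐᵒᵖ N] (n : ℕ) : Prop :=
  HasClassResolution Sᵐᵒᵖ (fun P => IsGorensteinFlat S P) n (ModuleCat.of Sᵐᵒᵖ N)

/-- The Gorenstein injective dimension of `M` is at most `n`. -/
def GidLE (A : Type u) [Ring A] (M : Type u) [AddCommGroup M] [Module A M] (n : ℕ) : Prop :=
  HasClassCoresolution A (fun E => IsGorensteinInjective A E) n (ModuleCat.of A M)

/-! ## Module classes `Prod(C)`, `Add(C)`, `add(C)` and (co)generators -/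

/-- `M` is a retract (equivalently, a direct summand up to isomorphism) of `P`. -/
def IsRetractOf (A : Type u) [Ring A] (M P : Type u) [AddCommGroup M] [Module A M]
    [AddCommGroup P] [Module A P] : Prop :=
  ∃ (f : M →ₗ[A] P) (g : P →ₗ[A] M), g.comp f = LinearMap.id

/-- `Prod(C)`: direct summands of direct products of copies of `C`. -/
def InProdClass (A : Type u) [Ring A] (C : Type u) [AddCommGroup C] [Module A C]
    (M : ModuleCat.{u} A) : Prop :=
  ∃ I : Type u, IsRetractOf A M (I → C)

/-- `Add(C)`: direct summands of direct sums of copies of `C`. -/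
def InAddClass (A : Type u) [Ring A] (C : Type u) [AddCommGroup C] [Module A C]
    (M : ModuleCat.{u} A) : Prop :=
  ∃ I : Type u, IsRetractOf A M (I →₀ C)

/-- `add(C)`: direct summands of finite direct sums of copies of `C`. -/
def InFinAddClass (A : Type u) [Ring A] (C : Type u) [AddCommGroup C] [Module A C]
    (M : ModuleCat.{u} A) : Prop :=
  ∃ k : ℕ, IsRetractOf A M (Fin k → C)

/-- `Q` is an injective cogenerator: `Q` is injective and every module embeds into a direct
product of copies of `Q`. -/
def IsInjectiveCogenerator (A : Type u) [Ring A] (Q : Type u) [AddCommGroup Q] [Module A Q] :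
    Prop :=
  Module.Injective A Q ∧
    ∀ (M : Type u) [AddCommGroup M] [Module A M],
      ∃ (I : Type u) (f : M →ₗ[A] (I → Q)), Function.Injective f

/-- `E` is the minimal injective cogenerator: it is an injective cogenerator which is a direct
summand of every injective cogenerator. -/
def IsMinimalInjectiveCogenerator (A : Type u) [Ring A] (E : Type u) [AddCommGroup E]
    [Module A E] : Prop :=
  IsInjectiveCogenerator A E ∧
    ∀ (Q : Type u) [AddCommGroup Q] [Module A Q],
      IsInjectiveCogenerator A Q → IsRetractOf A E Q

/-! ## Bimodules, homotheties, Wakamatsu tilting bimodules -/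

section Bimodules

variable (S R : Type u) [Ring S] [Ring R]
variable (T : Type u) [AddCommGroup T] [Module S T] [Module Rᵐᵒᵖ T] [SMulCommClass S Rᵐᵒᵖ T]

/-- The natural map `S → End(T_R)` given by the left `S`-action. -/
def leftHomothety : S → (T →ₗ[Rᵐᵒᵖ] T) := fun s =>
  { toFun := fun t => s • t
    map_add' := fun t t' => smul_add s t t'
    map_smul' := fun ρ t => smul_comm s ρ t }

/-- The natural map `R → End(_S T)` given by the right `R`-action. -/
def rightHomothety : R → (T →ₗ[S] T) := fun r =>
  { toFun := fun t => op r • t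
    map_add' := fun t t' => smul_add (op r) t t'
    map_smul' := fun s t => (smul_comm s (op r) t).symm }

/-- A Wakamatsu tilting `(S, R)`-bimodule: `T` admits resolutions by finitely generated
projectives on both sides, the natural maps `S → End(T_R)` and `R → End(_S T)` are
isomorphisms, and `Ext^i(T, T) = 0` on both sides for all `i ≥ 1`. -/
structure IsWakamatsuTilting : Prop where
  fgProjResR : HasFGProjResolution Rᵐᵒᵖ T
  fgProjResS : HasFGProjResolution S T
  bijS : Function.Bijective (leftHomothety S R T)
  bijR : Function.Bijective (rightHomothety S R T)
  extR : ExtVanishAll Rᵐᵒᵖ T T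
  extS : ExtVanishAll S T T

/-- An `(S, R)`-bimodule `T` is tensorly faithful if `T ⊗_R M = 0` implies `M = 0` and
`N ⊗_S T = 0` implies `N = 0`. -/
def IsTensorlyFaithful : Prop :=
  (∀ (M : Type u) [AddCommGroup M] [Module R M],
      Subsingleton (MTensor R T M) → Subsingleton M) ∧
  (∀ (N : Type u) [AddCommGroup N] [Module Sᵐᵒᵖ N],
      Subsingleton (MTensor S N T) → Subsingleton N)

/-- Membership in the Auslander class `𝒜_T(S)`. -/
structure InAuslanderClass (N : Type u) [AddCommGroup N] [Module Sᵐᵒᵖ N] : Prop where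
  torVanish : TorVanishAll S N T
  extVanish : ExtVanishAll Rᵐᵒᵖ T (MTensor S N T)
  thetaBij : Function.Bijective (MTensor.thetaFun S N T R)

/-- Membership in the Bass class `ℬ_T(R)`. -/
structure InBassClass (M : Type u) [AddCommGroup M] [Module Rᵐᵒᵖ M] : Prop where
  extVanish : ExtVanishAll Rᵐᵒᵖ T M
  torVanish : TorVanishAll S (T →ₗ[Rᵐᵒᵖ] M) T
  nuBij : Function.Bijective (MTensor.nuFun S R T M)

end Bimodules

/-! ## Cotilting and tilting modules -/

/-- A cotilting right `R`-module (Hügel–Coelho): finite injective dimension,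
`Ext^{i≥1}_R(Cᴵ, C) = 0` for every index set `I`, and there is a finite exact sequence
`0 → C_r → ⋯ → C_0 → Q → 0` with all `C_i ∈ Prod(C)` and `Q` an injective cogenerator. -/
structure IsCotilting (R : Type u) [Ring R] (C : Type u) [AddCommGroup C] [Module Rᵐᵒᵖ C] :
    Prop where
  finInjDim : ∃ n, InjDimLE Rᵐᵒᵖ C n
  extProdVanish : ∀ I : Type u, ExtVanishAll Rᵐᵒᵖ (I → C) C
  coresolution : ∃ (Q : ModuleCat.{u} Rᵐᵒᵖ) (r : ℕ),
    IsInjectiveCogenerator Rᵐᵒᵖ Q ∧ HasClassResolution Rᵐᵒᵖ (InProdClass Rᵐᵒᵖ C) r Q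

/-- An `n`-tilting right `R`-module (Miyashita). -/
structure IsNTilting (R : Type u) [Ring R] (T : Type u) [AddCommGroup T] [Module Rᵐᵒᵖ T]
    (n : ℕ) : Prop where
  fgProjRes : HasFGProjResolution Rᵐᵒᵖ T
  projDim : ProjDimLE Rᵐᵒᵖ T n
  extVanish : ExtVanishAll Rᵐᵒᵖ T T
  coresolution : HasClassCoresolution Rᵐᵒᵖ (InFinAddClass Rᵐᵒᵖ T) n (ModuleCat.of Rᵐᵒᵖ R)

/-- The data of a coresolution `0 → R → P 0 → P 1 → ⋯` of right `R`-modules. -/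
structure WakamatsuCoresolutionData (R : Type u) [Ring R] : Type (u + 1) where
  P : ℕ → Type u
  [instAdd : ∀ n, AddCommGroup (P n)]
  [instMod : ∀ n, Module Rᵐᵒᵖ (P n)]
  f0 : R →ₗ[Rᵐᵒᵖ] P 0
  d : ∀ n, P n →ₗ[Rᵐᵒᵖ] P (n + 1)

attribute [instance] WakamatsuCoresolutionData.instAdd WakamatsuCoresolutionData.instMod

/-- A Wakamatsu tilting right `R`-module: it admits a resolution by finitely generated
projective right `R`-modules, `Ext^{i≥1}_R(T, T) = 0`, and there is an exact sequence
`0 → R → T^0 → T^1 → ⋯` with each `T^i ∈ add(T)` and `Ext^1_R(Coker f, T) = 0` for every map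
`f` in this sequence. -/
def IsWakamatsuTiltingModule (R : Type u) [Ring R] (T : Type u) [AddCommGroup T]
    [Module Rᵐᵒᵖ T] : Prop :=
  HasFGProjResolution Rᵐᵒᵖ T ∧ ExtVanishAll Rᵐᵒᵖ T T ∧
    ∃ W : WakamatsuCoresolutionData R,
      Function.Injective W.f0 ∧ Function.Exact W.f0 (W.d 0) ∧
      (∀ n, Function.Exact (W.d n) (W.d (n + 1))) ∧
      (∀ n, InFinAddClass Rᵐᵒᵖ T (ModuleCat.of Rᵐᵒᵖ (W.P n))) ∧
      Ext1Vanishes Rᵐᵒᵖ ((W.P 0) ⧸ LinearMap.range W.f0) T ∧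
      (∀ n, Ext1Vanishes Rᵐᵒᵖ ((W.P (n + 1)) ⧸ LinearMap.range (W.d n)) T)

/-!
Over a left coherent ring every finitely generated left ideal `J` has a resolution by finite free
modules `S^k`, which computes `Tor_*(-, S ⧸ J)` and `Ext^*(S ⧸ J, -)`. Tensor evaluation
`Hom_R(T, I) ⊗_S S^k ≅ Hom_R(Hom_S(S^k, T), I)` and exactness of `Hom_R(-, I)` give
`Tor_i(Hom_R(T, I), S ⧸ J) ≅ Hom_R(Ext^i(S ⧸ J, T), I)`, which vanishes for `i > injdim T`.
A right module `M` with `Tor_1(M, S ⧸ J) = 0` for all finitely generated `J` is flat, because then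
its character module is injective by Baer's criterion; dimension shifting along free covers turns
`Tor_{n+1}(M, S ⧸ J) = 0` for all such `J` into a flat resolution of length `n`.
-/

namespace Function.Exact

variable {X X' X'' : Type*} [AddCommGroup X] [AddCommGroup X'] [AddCommGroup X'']
variable {f : X →+ X'} {g : X' →+ X''}

theorem compLeft (h : Exact f g) (ι : Type*) : Exact (f.compLeft ι) (g.compLeft ι) := by
  intro v
  constructor
  · intro hv
    choose u hu using fun i => (h (v i)).1 (congrFun hv i)
    exact ⟨u, funext hu⟩
  · rintro ⟨u, rfl⟩
    exact funext fun i => h.apply_apply_eq_zero (u i)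

theorem finsuppMapRange (h : Exact f g) (ι : Type*) :
    Exact (Finsupp.mapRange.addMonoidHom (ι := ι) f) (Finsupp.mapRange.addMonoidHom g) := by
  classical
  intro v
  constructor
  · intro hv
    choose u hu using fun i => (h (v i)).1 (by simpa using DFunLike.congr_fun hv i)
    refine ⟨Finsupp.onFinset v.support (fun i => if v i = 0 then 0 else u i) fun i hi => ?_, ?_⟩
    · rw [Finsupp.mem_support_iff]
      rintro h0
      simp [h0] at hi
    · ext i
      by_cases h0 : v i = 0 <;> simp [h0, hu]
  · rintro ⟨u, rfl⟩
    ext i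
    simp [h.apply_apply_eq_zero]

end Function.Exact

namespace MTensor

variable {S : Type u} [Ring S]

section Basic

variable {N N' N'' : Type u} [AddCommGroup N] [Module Sᵐᵒᵖ N] [AddCommGroup N']
  [Module Sᵐᵒᵖ N'] [AddCommGroup N''] [Module Sᵐᵒᵖ N'']
variable {X X' X'' : Type u} [AddCommGroup X] [Module S X] [AddCommGroup X']
  [Module S X'] [AddCommGroup X''] [Module S X'']

theorem mk_add_left (n n' : N) (x : X) :
    (mk (n + n') x : MTensor S N X) = mk n x + mk n' x := by
  simp only [mk, TensorProduct.tmul_add]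
  rfl

@[simp] theorem mk_zero_left (x : X) : (mk (0 : N) x : MTensor S N X) = 0 := by
  simp only [mk, TensorProduct.tmul_zero]
  rfl

@[simp] theorem mk_zero_right (n : N) : (mk n (0 : X) : MTensor S N X) = 0 := by
  simp only [mk, TensorProduct.zero_tmul]
  rfl

theorem mk_smul (s : S) (n : N) (x : X) :
    (mk n (s • x) : MTensor S N X) = mk (op s • n) x :=
  QuotientAddGroup.eq_iff_sub_mem.2 (AddSubgroup.subset_closure ⟨s, x, n, rfl⟩)

@[elab_as_elim]
theorem induction_on {motive : MTensor S N X → Prop} (z : MTensor S N X)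
    (mk : ∀ n x, motive (mk n x)) (add : ∀ a b, motive a → motive b → motive (a + b)) :
    motive z := by
  obtain ⟨t, rfl⟩ := QuotientAddGroup.mk_surjective z
  induction t using TensorProduct.induction_on with
  | zero => have h0 := mk 0 0; rw [mk_zero_left] at h0; exact h0
  | tmul x n => exact mk n x
  | add a b ha hb => exact add _ _ ha hb

theorem addHom_ext {A : Type*} [AddCommGroup A] {f g : MTensor S N X →+ A}
    (h : ∀ n x, f (mk n x) = g (mk n x)) : f = g :=
  AddMonoidHom.ext fun z => induction_on z h fun a b ha hb => by simp [ha, hb]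

@[simp] theorem lmap_mk (h : X →ₗ[S] X') (n : N) (x : X) :
    lmap h (mk n x : MTensor S N X) = mk n (h x) := rfl

@[simp] theorem map_mk (g : N →ₗ[Sᵐᵒᵖ] N') (n : N) (x : X) :
    map g (mk n x : MTensor S N X) = mk (g n) x := rfl

theorem lmap_lmap (h' : X' →ₗ[S] X'') (h : X →ₗ[S] X') (z : MTensor S N X) :
    lmap h' (lmap h z) = lmap (h'.comp h) z :=
  DFunLike.congr_fun (addHom_ext (f := (lmap h').comp (lmap h)) (g := lmap (h'.comp h))
    fun _ _ => rfl) z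

theorem map_map (g' : N' →ₗ[Sᵐᵒᵖ] N'') (g : N →ₗ[Sᵐᵒᵖ] N') (z : MTensor S N X) :
    map g' (map g z) = map (g'.comp g) z :=
  DFunLike.congr_fun (addHom_ext (f := (map g').comp (map g)) (g := map (g'.comp g))
    fun _ _ => by simp) z

theorem map_lmap (g : N →ₗ[Sᵐᵒᵖ] N') (h : X →ₗ[S] X') (z : MTensor S N X) :
    map g (lmap h z) = lmap h (map g z) :=
  DFunLike.congr_fun (addHom_ext (f := (map g).comp (lmap h)) (g := (lmap h).comp (map g))
    fun _ _ => rfl) z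

@[simp] theorem lmap_zero : lmap (N := N) (0 : X →ₗ[S] X') = 0 :=
  addHom_ext fun _ _ => by simp only [lmap_mk, LinearMap.zero_apply, mk_zero_right]; rfl

@[simp] theorem map_zero_linearMap : map (T := X) (0 : N →ₗ[Sᵐᵒᵖ] N') = 0 :=
  addHom_ext fun _ _ => by simp only [map_mk, LinearMap.zero_apply, mk_zero_left]; rfl

theorem lmap_surjective {h : X →ₗ[S] X'} (hh : Function.Surjective h) :
    Function.Surjective (lmap (N := N) h) := by
  intro z
  induction z using induction_on with
  | mk n x => obtain ⟨y, rfl⟩ := hh x; exact ⟨mk n y, rfl⟩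
  | add a b ha hb =>
    obtain ⟨a, rfl⟩ := ha
    obtain ⟨b, rfl⟩ := hb
    exact ⟨a + b, map_add _ _ _⟩

theorem map_surjective {g : N →ₗ[Sᵐᵒᵖ] N'} (hg : Function.Surjective g) :
    Function.Surjective (map (T := X) g) := by
  intro z
  induction z using induction_on with
  | mk n x => obtain ⟨m, rfl⟩ := hg n; exact ⟨mk m x, rfl⟩
  | add a b ha hb =>
    obtain ⟨a, rfl⟩ := ha
    obtain ⟨b, rfl⟩ := hb
    exact ⟨a + b, map_add _ _ _⟩

def lift {A : Type*} [AddCommGroup A] (f : X →+ N →+ A)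
    (hf : ∀ (s : S) (x : X) (n : N), f (s • x) n = f x (op s • n)) : MTensor S N X →+ A :=
  QuotientAddGroup.lift _ (TensorProduct.liftAddHom f fun z x n => by simp [map_zsmul]) <| by
    refine (AddSubgroup.closure_le _).2 ?_
    rintro t ⟨s, x, n, rfl⟩
    simp [hf]

@[simp] theorem lift_mk {A : Type*} [AddCommGroup A] (f : X →+ N →+ A)
    (hf : ∀ (s : S) (x : X) (n : N), f (s • x) n = f x (op s • n)) (n : N) (x : X) :
    lift f hf (mk n x) = f x n := rfl

theorem mk_sum_left {ι : Type*} (s : Finset ι) (n : ι → N) (x : X) :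
    (mk (∑ i ∈ s, n i) x : MTensor S N X) = ∑ i ∈ s, mk (n i) x :=
  map_sum (AddMonoidHom.mk' (fun n => (mk n x : MTensor S N X)) fun n n' => mk_add_left n n' x) n s

theorem mk_sum_right {ι : Type*} (s : Finset ι) (n : N) (x : ι → X) :
    (mk n (∑ i ∈ s, x i) : MTensor S N X) = ∑ i ∈ s, mk n (x i) :=
  map_sum (AddMonoidHom.mk' (fun x => (mk n x : MTensor S N X)) (mk_add_right n)) x s

end Basic

section FinFree

variable {k : ℕ}
variable {M M' M'' : Type u} [AddCommGroup M] [Module Sᵐᵒᵖ M] [AddCommGroup M'] [Module Sᵐᵒᵖ M']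
  [AddCommGroup M''] [Module Sᵐᵒᵖ M'']

def piEquiv : MTensor S M (Fin k → S) ≃+ (Fin k → M) where
  toFun := lift
    (AddMonoidHom.mk' (fun x => AddMonoidHom.mk' (fun n i => op (x i) • n) fun n n' => by
        ext i; simp [smul_add])
      fun x x' => by ext n i; simp [add_smul])
    fun s x n => by ext i; simp [op_mul, mul_smul]
  invFun v := ∑ i, mk (v i) (Pi.single i 1)
  left_inv z := by
    induction z using induction_on with
    | mk n x =>
      classical
      calc ∑ i, (mk (op (x i) • n) (Pi.single i 1) : MTensor S M (Fin k → S))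
          = ∑ i, mk n (x i • Pi.single i 1) := by simp only [mk_smul]
        _ = mk n x := by rw [← mk_sum_right, ← pi_eq_sum_univ']
    | add a b ha hb =>
      simp only [map_add, Pi.add_apply, mk_add_left, Finset.sum_add_distrib] at ha hb ⊢
      rw [ha, hb]
  right_inv v := by
    classical
    ext j
    simp [Finset.sum_apply, Pi.single_apply, apply_ite op, ite_smul]
  map_add' := map_add _

@[simp] theorem piEquiv_mk (n : M) (x : Fin k → S) :
    piEquiv (mk n x) = fun i => op (x i) • n := rfl

theorem piEquiv_map (g : M →ₗ[Sᵐᵒᵖ] M') (z : MTensor S M (Fin k → S)) (i : Fin k) :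
    piEquiv (map g z) i = g (piEquiv z i) := by
  induction z using induction_on with
  | mk n x => simp
  | add a b ha hb => simp [ha, hb]


theorem map_injective_pi {g : M →ₗ[Sᵐᵒᵖ] M'} (hg : Function.Injective g) :
    Function.Injective (map (T := Fin k → S) g) := fun z z' h =>
  piEquiv.injective <| funext fun i => hg <| by rw [← piEquiv_map, ← piEquiv_map, h]

theorem map_exact_pi {f : M →ₗ[Sᵐᵒᵖ] M'} {g : M' →ₗ[Sᵐᵒᵖ] M''} (h : Function.Exact f g) :
    Function.Exact (map (T := Fin k → S) f) (map g) :=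
  Function.Exact.of_ladder_addEquiv_of_exact' piEquiv piEquiv piEquiv
    (AddMonoidHom.ext fun z => funext (piEquiv_map f z)).symm
    (AddMonoidHom.ext fun z => funext (piEquiv_map g z)).symm
    (Function.Exact.compLeft (f := f.toAddMonoidHom) (g := g.toAddMonoidHom) h (Fin k))

end FinFree

section Free

variable {κ : Type u}
variable {X X' X'' : Type u} [AddCommGroup X] [Module S X] [AddCommGroup X'] [Module S X']
  [AddCommGroup X''] [Module S X'']

def smulRightAddHom (x : X) : Sᵐᵒᵖ →+ X :=
  AddMonoidHom.mk' (fun a => unop a • x) fun a b => add_smul (unop a) (unop b) x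

def finsuppEquiv : MTensor S (κ →₀ Sᵐᵒᵖ) X ≃+ (κ →₀ X) where
  toFun := lift
    (AddMonoidHom.mk' (fun x => Finsupp.mapRange.addMonoidHom (smulRightAddHom x)) fun x x' => by
      ext i a; simp [smulRightAddHom, smul_add])
    fun s x g => by ext i; simp [smulRightAddHom, mul_smul]
  invFun := Finsupp.liftAddHom fun i =>
    AddMonoidHom.mk' (fun x => mk (Finsupp.single i 1) x) (mk_add_right _)
  left_inv z := by
    induction z using induction_on with
    | mk g x =>
      have hterm : ∀ i (a : Sᵐᵒᵖ),
          (mk (Finsupp.single i 1) (unop a • x) : MTensor S (κ →₀ Sᵐᵒᵖ) X) =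
            mk (Finsupp.single i a) x := fun i a => by
        rw [mk_smul, Finsupp.smul_single, smul_eq_mul, mul_one, op_unop]
      simp only [lift_mk, AddMonoidHom.mk'_apply, Finsupp.mapRange.addMonoidHom_apply,
        Finsupp.liftAddHom_apply]
      rw [Finsupp.sum_mapRange_index fun i => by simp]
      simp only [smulRightAddHom, AddMonoidHom.mk'_apply, hterm]
      rw [Finsupp.sum, ← mk_sum_left]
      exact congrArg (mk · x) g.sum_single
    | add a b ha hb => simp only [map_add] at ha hb ⊢; rw [ha, hb]
  right_inv v := by
    induction v using Finsupp.induction_linear with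
    | zero => simp
    | add v w hv hw => simp only [map_add] at hv hw ⊢; rw [hv, hw]
    | single i x => simp [smulRightAddHom]
  map_add' := map_add _

theorem finsuppEquiv_lmap (h : X →ₗ[S] X') (z : MTensor S (κ →₀ Sᵐᵒᵖ) X) :
    finsuppEquiv (lmap h z) = Finsupp.mapRange h h.map_zero (finsuppEquiv z) := by
  induction z using induction_on with
  | mk g x => ext i; simp [finsuppEquiv, smulRightAddHom]
  | add a b ha hb => simp only [map_add, ha, hb, Finsupp.mapRange_add h.map_add]

theorem lmap_exact_finsupp {f : X →ₗ[S] X'} {g : X' →ₗ[S] X''} (h : Function.Exact f g) :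
    Function.Exact (lmap (N := κ →₀ Sᵐᵒᵖ) f) (lmap g) :=
  Function.Exact.of_ladder_addEquiv_of_exact' finsuppEquiv finsuppEquiv finsuppEquiv
    (AddMonoidHom.ext (finsuppEquiv_lmap f)).symm (AddMonoidHom.ext (finsuppEquiv_lmap g)).symm
    (Function.Exact.finsuppMapRange (f := f.toAddMonoidHom) (g := g.toAddMonoidHom) h κ)

theorem isFlatRightModule_finsupp : IsFlatRightModule S (κ →₀ Sᵐᵒᵖ) :=
  fun _ _ _ _ _ _ g hg z z' h => finsuppEquiv.injective <|
    Finsupp.mapRange_injective g g.map_zero hg <| by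
      rw [← finsuppEquiv_lmap, ← finsuppEquiv_lmap, h]

end Free

section TensorEval

variable {R : Type u} [Ring R]
variable {T : Type u} [AddCommGroup T] [Module S T] [Module Rᵐᵒᵖ T] [SMulCommClass S Rᵐᵒᵖ T]
variable {I : Type u} [AddCommGroup I] [Module Rᵐᵒᵖ I]
variable {X X' : Type u} [AddCommGroup X] [Module S X] [AddCommGroup X'] [Module S X']

def tensorEval : MTensor S (T →ₗ[Rᵐᵒᵖ] I) X →+ ((X →ₗ[S] T) →ₗ[Rᵐᵒᵖ] I) :=
  lift
    (AddMonoidHom.mk'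
      (fun x => AddMonoidHom.mk'
        (fun f =>
          { toFun := fun g => f (g x)
            map_add' := fun g g' => map_add f (g x) (g' x)
            map_smul' := fun ρ g => map_smul f ρ (g x) })
        fun _ _ => rfl)
      fun x x' => by ext f g; simp)
    fun s x f => by ext g; simp

@[simp] theorem tensorEval_mk (f : T →ₗ[Rᵐᵒᵖ] I) (x : X) (g : X →ₗ[S] T) :
    tensorEval (mk f x) g = f (g x) := rfl

theorem tensorEval_lmap (h : X →ₗ[S] X') (z : MTensor S (T →ₗ[Rᵐᵒᵖ] I) X) :
    tensorEval (lmap h z) = (tensorEval z).comp (LinearMap.lcomp Rᵐᵒᵖ T h) := by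
  induction z using induction_on with
  | mk f x => rfl
  | add a b ha hb => simp only [map_add, ha, hb, LinearMap.add_comp]

variable {k : ℕ}

variable (R T) in
def coordSmul (i : Fin k) : T →ₗ[Rᵐᵒᵖ] ((Fin k → S) →ₗ[S] T) where
  toFun t := (LinearMap.proj (R := S) (φ := fun _ : Fin k => S) i).smulRight t
  map_add' t t' := LinearMap.ext fun x => smul_add (x i) t t'
  map_smul' ρ t := LinearMap.ext fun x => smul_comm (x i) ρ t

@[simp] theorem coordSmul_apply (i : Fin k) (t : T) (x : Fin k → S) :
    coordSmul R T i t x = x i • t := rfl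

theorem sum_coordSmul_apply (g : (Fin k → S) →ₗ[S] T) :
    ∑ i, coordSmul R T i (g (Pi.single i 1)) = g := by
  ext x
  simp

theorem piEquiv_eq_tensorEval_comp (z : MTensor S (T →ₗ[Rᵐᵒᵖ] I) (Fin k → S)) (i : Fin k) :
    piEquiv z i = (tensorEval z).comp (coordSmul R T i) := by
  induction z using induction_on with
  | mk f x => ext t; simp
  | add a b ha hb => simp only [map_add, Pi.add_apply, ha, hb, LinearMap.add_comp]

theorem tensorEval_injective :
    Function.Injective (tensorEval (S := S) (R := R) (T := T) (I := I) (X := Fin k → S)) :=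
  fun z z' h => piEquiv.injective <| funext fun i => by
    rw [piEquiv_eq_tensorEval_comp, piEquiv_eq_tensorEval_comp, h]

theorem tensorEval_surjective :
    Function.Surjective (tensorEval (S := S) (R := R) (T := T) (I := I) (X := Fin k → S)) := by
  intro Φ
  refine ⟨piEquiv.symm fun i => Φ.comp (coordSmul R T i), LinearMap.ext fun g => ?_⟩
  change tensorEval (∑ i, mk (Φ.comp (coordSmul R T i)) (Pi.single i 1)) g = Φ g
  simp only [map_sum, LinearMap.sum_apply, tensorEval_mk, LinearMap.comp_apply]
  rw [← map_sum, sum_coordSmul_apply]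

end TensorEval

end MTensor

variable (S : Type u) [Ring S] in
/-- `CharacterModule M` as a left `S`-module (a type synonym: `S` is not determined by `M`). -/
def LeftCharacterModule (M : Type u) [AddCommGroup M] [Module Sᵐᵒᵖ M] : Type u :=
  CharacterModule M

namespace LeftCharacterModule

variable {S : Type u} [Ring S]
variable {M : Type u} [AddCommGroup M] [Module Sᵐᵒᵖ M] {X : Type u} [AddCommGroup X] [Module S X]

instance : AddCommGroup (LeftCharacterModule S M) :=
  inferInstanceAs (AddCommGroup (CharacterModule M))

instance : FunLike (LeftCharacterModule S M) M (AddCircle (1 : ℚ)) :=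
  inferInstanceAs (FunLike (CharacterModule M) M (AddCircle (1 : ℚ)))

instance : AddMonoidHomClass (LeftCharacterModule S M) M (AddCircle (1 : ℚ)) :=
  inferInstanceAs (AddMonoidHomClass (CharacterModule M) M (AddCircle (1 : ℚ)))

@[ext] theorem ext {c c' : LeftCharacterModule S M} (h : ∀ m, c m = c' m) : c = c' :=
  DFunLike.ext _ _ h

instance : SMul S (LeftCharacterModule S M) :=
  ⟨fun s c => (c : CharacterModule M).comp (DistribSMul.toAddMonoidHom M (op s))⟩

@[simp] theorem smul_apply (s : S) (c : LeftCharacterModule S M) (m : M) :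
    (s • c) m = c (op s • m) := rfl

instance : Module S (LeftCharacterModule S M) where
  one_smul c := by ext; simp
  mul_smul s s' c := by ext; simp [mul_smul]
  smul_zero s := by ext; rfl
  smul_add s c c' := by ext; rfl
  add_smul s s' c := by ext; simp only [smul_apply, op_add, add_smul, map_add]; rfl
  zero_smul c := by ext; simp only [smul_apply, op_zero, zero_smul, map_zero]; rfl

def ofTensor (χ : MTensor S M X →+ AddCircle (1 : ℚ)) : X →ₗ[S] LeftCharacterModule S M where
  toFun x := AddMonoidHom.mk' (fun m => χ (MTensor.mk m x)) fun m m' => by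
    rw [MTensor.mk_add_left, map_add]
  map_add' x x' := by ext m; simp only [MTensor.mk_add_right, map_add]; rfl
  map_smul' s x := by ext m; simp only [MTensor.mk_smul, RingHom.id_apply]; rfl

@[simp] theorem ofTensor_apply (χ : MTensor S M X →+ AddCircle (1 : ℚ)) (x : X) (m : M) :
    ofTensor χ x m = χ (MTensor.mk m x) := rfl

def toTensor (φ : X →ₗ[S] LeftCharacterModule S M) : MTensor S M X →+ AddCircle (1 : ℚ) :=
  MTensor.lift
    (AddMonoidHom.mk' (fun x => show M →+ AddCircle (1 : ℚ) from φ x) fun x x' => by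
      rw [map_add]; rfl)
    fun s x m => by
      change φ (s • x) m = φ x (op s • m)
      rw [map_smul, smul_apply]

@[simp] theorem toTensor_mk (φ : X →ₗ[S] LeftCharacterModule S M) (m : M) (x : X) :
    toTensor φ (MTensor.mk m x) = φ x m := rfl

end LeftCharacterModule

section FlatnessCriterion

variable {S : Type u} [Ring S] {M : Type u} [AddCommGroup M] [Module Sᵐᵒᵖ M]

theorem baer_leftCharacterModule_of_injective_lmap
    (H : ∀ J : Ideal S, Function.Injective (MTensor.lmap (N := M) J.subtype)) :
    Module.Baer S (LeftCharacterModule S M) := by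
  intro J φ
  obtain ⟨χ, hχ⟩ := CharacterModule.dual_surjective_of_injective
    (MTensor.lmap (N := M) J.subtype).toIntLinearMap (H J) (LeftCharacterModule.toTensor φ)
  exact ⟨LeftCharacterModule.ofTensor χ, fun x hx => LeftCharacterModule.ext fun m =>
    DFunLike.congr_fun hχ (MTensor.mk m (⟨x, hx⟩ : J))⟩

theorem isFlatRightModule_of_injective_leftCharacterModule
    (h : Module.Injective S (LeftCharacterModule S M)) : IsFlatRightModule S M := by
  intro X Y _ _ _ _ g hg
  rw [injective_iff_map_eq_zero]
  intro z hz
  by_contra hne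
  obtain ⟨c, hc⟩ : ∃ c : MTensor S M X →+ AddCircle (1 : ℚ), c z ≠ 0 :=
    CharacterModule.exists_character_apply_ne_zero_of_ne_zero hne
  obtain ⟨ψ, hψ⟩ := h.out g hg (LeftCharacterModule.ofTensor c)
  have hfactor : c = (LeftCharacterModule.toTensor ψ).comp (MTensor.lmap g) :=
    MTensor.addHom_ext fun m x => by simp [hψ]
  exact hc (by rw [DFunLike.congr_fun hfactor z]; simp [hz])

variable {X : Type u} [AddCommGroup X] [Module S X]

theorem MTensor.exists_fg_lmap_inclusion_eq {J : Submodule S X} (z : MTensor S M J) :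
    ∃ (J₀ : Submodule S X) (hle : J₀ ≤ J), J₀.FG ∧
      ∃ z₀ : MTensor S M J₀, MTensor.lmap (Submodule.inclusion hle) z₀ = z := by
  induction z using MTensor.induction_on with
  | mk m x =>
    refine ⟨Submodule.span S {(x : X)}, (Submodule.span_singleton_le_iff_mem _ _).2 x.2,
      Submodule.fg_span_singleton _, MTensor.mk m ⟨x, Submodule.mem_span_singleton_self _⟩, rfl⟩
  | add a b ha hb =>
    obtain ⟨J₁, hle₁, hfg₁, z₁, rfl⟩ := ha
    obtain ⟨J₂, hle₂, hfg₂, z₂, rfl⟩ := hb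
    refine ⟨J₁ ⊔ J₂, sup_le hle₁ hle₂, hfg₁.sup hfg₂,
      MTensor.lmap (Submodule.inclusion le_sup_left) z₁ +
        MTensor.lmap (Submodule.inclusion le_sup_right) z₂, ?_⟩
    simp only [map_add, MTensor.lmap_lmap]
    rfl

theorem MTensor.injective_lmap_subtype_of_fg
    (H : ∀ J₀ : Submodule S X, J₀.FG → Function.Injective (MTensor.lmap (N := M) J₀.subtype))
    (J : Submodule S X) : Function.Injective (MTensor.lmap (N := M) J.subtype) := by
  rw [injective_iff_map_eq_zero]
  intro z hz
  obtain ⟨J₀, hle, hfg, z₀, rfl⟩ := MTensor.exists_fg_lmap_inclusion_eq z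
  rw [MTensor.lmap_lmap] at hz
  rw [H J₀ hfg (hz.trans (map_zero _).symm), map_zero]

theorem isFlatRightModule_of_forall_fg_ideal
    (H : ∀ J : Ideal S, J.FG → Function.Injective (MTensor.lmap (N := M) J.subtype)) :
    IsFlatRightModule S M :=
  isFlatRightModule_of_injective_leftCharacterModule
    (baer_leftCharacterModule_of_injective_lmap (MTensor.injective_lmap_subtype_of_fg H)).injective

end FlatnessCriterion

section Lifting

variable {A : Type u} [Ring A] {B C Q : Type u} [AddCommGroup B] [Module A B]
  [AddCommGroup C] [Module A C] [AddCommGroup Q] [Module A Q]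

theorem Module.Injective.exists_comp_eq_of_ker_le [Module.Injective A Q] (b : B →ₗ[A] C)
    (φ : B →ₗ[A] Q) (h : LinearMap.ker b ≤ LinearMap.ker φ) : ∃ ψ : C →ₗ[A] Q, ψ ∘ₗ b = φ := by
  obtain ⟨ψ, hψ⟩ := Module.Injective.out (LinearMap.range b).subtype
    (Submodule.injective_subtype _) ((LinearMap.ker b).liftQ φ h ∘ₗ b.quotKerEquivRange.symm)
  refine ⟨ψ, LinearMap.ext fun x => ?_⟩
  have := hψ ⟨b x, LinearMap.mem_range_self b x⟩
  simp only [Submodule.subtype_apply, LinearMap.coe_comp, Function.comp_apply] at this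
  rw [LinearMap.comp_apply, this, LinearEquiv.coe_coe,
    LinearMap.quotKerEquivRange_symm_apply_image, Submodule.mkQ_apply, Submodule.liftQ_apply]

theorem LinearMap.exists_comp_eq_of_range_le {f : B →ₗ[A] C} (hf : Function.Injective f)
    (g : Q →ₗ[A] C) (h : LinearMap.range g ≤ LinearMap.range f) :
    ∃ β : Q →ₗ[A] B, f ∘ₗ β = g :=
  ⟨(LinearEquiv.ofInjective f hf).symm ∘ₗ g.codRestrict _ fun x => h ⟨x, rfl⟩,
    LinearMap.ext fun x => congrArg Subtype.val
      ((LinearEquiv.ofInjective f hf).apply_symm_apply ⟨g x, _⟩)⟩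

end Lifting

section Coherence

variable {S : Type u} [Ring S]

theorem finitePresentation_of_injective_pi (hS : IsLeftCoherentRing S) {k : ℕ} :
    ∀ {M : Type u} [AddCommGroup M] [Module S M] [Module.Finite S M]
      (f : M →ₗ[S] (Fin k → S)), Function.Injective f → Module.FinitePresentation S M := by
  induction k with
  | zero =>
    intro M _ _ _ f hf
    have : Subsingleton M := hf.subsingleton
    exact Module.FinitePresentation.of_equiv (LinearEquiv.ofSubsingleton (Fin 0 → S) M)
  | succ k ih =>
    intro M _ _ _ f hf
    -- the last coordinate `q` has a finitely generated ideal as image, and `ker q` embeds in `Sᵏ`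
    let q : M →ₗ[S] S := LinearMap.proj (Fin.last k) ∘ₗ f
    have : Module.FinitePresentation S (LinearMap.range q) :=
      hS _ (Module.Finite.iff_fg.1 inferInstance)
    have : Module.Finite S (LinearMap.ker q.rangeRestrict) :=
      .of_fg (Module.FinitePresentation.fg_ker _ q.surjective_rangeRestrict)
    have : Module.FinitePresentation S (LinearMap.ker q.rangeRestrict) := by
      refine ih (LinearMap.funLeft S S Fin.castSucc ∘ₗ f ∘ₗ (LinearMap.ker _).subtype)
        fun a b hab => Subtype.ext <| hf <| funext fun i => Fin.lastCases ?_ (congrFun hab) i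
      have ha := congrArg Subtype.val (LinearMap.mem_ker.1 a.2)
      have hb := congrArg Subtype.val (LinearMap.mem_ker.1 b.2)
      exact ha.trans hb.symm
    exact Module.finitePresentation_of_ker q.rangeRestrict q.surjective_rangeRestrict

theorem exists_fin_surjective_fg_ker (P : Type u) [AddCommGroup P] [Module S P]
    [Module.FinitePresentation S P] :
    ∃ (m : ℕ) (π : (Fin m → S) →ₗ[S] P), Function.Surjective π ∧ (LinearMap.ker π).FG := by
  obtain ⟨m, π, hπ⟩ := Module.Finite.exists_fin' S P
  exact ⟨m, π, hπ, Module.FinitePresentation.fg_ker π hπ⟩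

theorem exists_fin_surjective_fg_ker_of_le_pi (hS : IsLeftCoherentRing S) {k : ℕ}
    (K : Submodule S (Fin k → S)) (hK : K.FG) :
    ∃ (m : ℕ) (π : (Fin m → S) →ₗ[S] K), Function.Surjective π ∧ (LinearMap.ker π).FG := by
  have : Module.Finite S K := Module.Finite.iff_fg.2 hK
  have := finitePresentation_of_injective_pi hS K.subtype K.injective_subtype
  exact exists_fin_surjective_fg_ker K

end Coherence

variable (S : Type u) [Ring S] in
structure FinFreeResolution (J : Ideal S) where
  rank : ℕ → ℕ
  π : (Fin (rank 0) → S) →ₗ[S] J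
  π_surjective : Function.Surjective π
  d : ∀ j, (Fin (rank (j + 1)) → S) →ₗ[S] (Fin (rank j) → S)
  exact_zero : Function.Exact (d 0) π
  exact : ∀ j, Function.Exact (d (j + 1)) (d j)

namespace FinFreeResolution

variable {S : Type u} [Ring S] {J : Ideal S}

theorem nonempty (hS : IsLeftCoherentRing S) (hJ : J.FG) : Nonempty (FinFreeResolution S J) := by
  have : Module.FinitePresentation S J := hS J hJ
  obtain ⟨k₀, π₀, hπ₀, hker₀⟩ := exists_fin_surjective_fg_ker (S := S) J
  choose rank π hπ hker using fun K : Σ k, {K : Submodule S (Fin k → S) // K.FG} =>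
    exists_fin_surjective_fg_ker_of_le_pi hS K.2.1 K.2.2
  -- the `j`-th syzygy, as a finitely generated submodule of `S^{k_j}`
  let syz : ℕ → Σ k, {K : Submodule S (Fin k → S) // K.FG} := fun j =>
    Nat.rec ⟨k₀, LinearMap.ker π₀, hker₀⟩ (fun _ K => ⟨rank K, LinearMap.ker (π K), hker K⟩) j
  exact ⟨{
    rank := fun j => (syz j).1
    π := π₀
    π_surjective := hπ₀
    d := fun j => (syz j).2.1.subtype ∘ₗ π (syz j)
    exact_zero := (hπ (syz 0)).comp_exact_iff_exact.2 (LinearMap.exact_subtype_ker_map π₀)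
    exact := fun j => (hπ (syz (j + 1))).comp_exact_iff_exact.2 <|
      (syz j).2.1.injective_subtype.comp_exact_iff_exact.2 (LinearMap.exact_subtype_ker_map _) }⟩

variable (F : FinFreeResolution S J)

/-- The ranks of the augmented resolution `⋯ → S^{k₁} → S^{k₀} → S¹` of `S ⧸ J`. -/
abbrev dim : ℕ → ℕ
  | 0 => 1
  | j + 1 => F.rank j

abbrev P (j : ℕ) : Type u := Fin (F.dim j) → S

def δ : ∀ j, F.P (j + 1) →ₗ[S] F.P j
  | 0 => (LinearEquiv.funUnique (Fin 1) S S).symm.toLinearMap ∘ₗ J.subtype ∘ₗ F.π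
  | j + 1 => F.d j

theorem exact_δ : ∀ j, Function.Exact (F.δ (j + 1)) (F.δ j)
  | 0 => (LinearEquiv.funUnique (Fin 1) S S).symm.injective.comp_exact_iff_exact.2 <|
      J.injective_subtype.comp_exact_iff_exact.2 F.exact_zero
  | j + 1 => F.exact j

theorem δ_comp_δ (j : ℕ) : F.δ j ∘ₗ F.δ (j + 1) = 0 :=
  (F.exact_δ j).linearMap_comp_eq_zero

/-- `Tor^S_{m+1}(M, S ⧸ J) = 0`, computed with `F`. -/
def TorVanishes (M : Type u) [AddCommGroup M] [Module Sᵐᵒᵖ M] (m : ℕ) : Prop :=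
  ∀ y : MTensor S M (F.P (m + 1)), MTensor.lmap (F.δ m) y = 0 →
    ∃ w : MTensor S M (F.P (m + 2)), MTensor.lmap (F.δ (m + 1)) w = y

/-- `Ext_S^{m+1}(S ⧸ J, W) = 0`, computed with `F`. -/
def ExtVanishes (W : Type u) [AddCommGroup W] [Module S W] (m : ℕ) : Prop :=
  ∀ φ : F.P (m + 1) →ₗ[S] W, φ ∘ₗ F.δ (m + 1) = 0 → ∃ ψ : F.P m →ₗ[S] W, ψ ∘ₗ F.δ m = φ

theorem torVanishes_finsupp (κ : Type u) (m : ℕ) : F.TorVanishes (κ →₀ Sᵐᵒᵖ) m :=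
  fun y hy => (MTensor.lmap_exact_finsupp (F.exact_δ m) y).1 hy

theorem injective_lmap_subtype_of_torVanishes_zero {M : Type u} [AddCommGroup M]
    [Module Sᵐᵒᵖ M] (h : F.TorVanishes M 0) :
    Function.Injective (MTensor.lmap (N := M) J.subtype) := by
  rw [injective_iff_map_eq_zero]
  intro z hz
  obtain ⟨y, rfl⟩ := MTensor.lmap_surjective F.π_surjective z
  obtain ⟨w, rfl⟩ := h y <| by
    change MTensor.lmap (_ ∘ₗ J.subtype ∘ₗ F.π) y = 0
    rw [← MTensor.lmap_lmap, ← MTensor.lmap_lmap, hz, map_zero]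
  change MTensor.lmap F.π (MTensor.lmap (F.d 0) w) = 0
  rw [MTensor.lmap_lmap, F.exact_zero.linearMap_comp_eq_zero, MTensor.lmap_zero]
  rfl

theorem torVanishes_of_exact {K E M : Type u} [AddCommGroup K] [Module Sᵐᵒᵖ K]
    [AddCommGroup E] [Module Sᵐᵒᵖ E] [AddCommGroup M] [Module Sᵐᵒᵖ M]
    {ι : K →ₗ[Sᵐᵒᵖ] E} {ε : E →ₗ[Sᵐᵒᵖ] M} (hι : Function.Injective ι)
    (hε : Function.Surjective ε) (hιε : Function.Exact ι ε) (hE : ∀ m, F.TorVanishes E m)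
    {m : ℕ} (hM : F.TorVanishes M (m + 1)) : F.TorVanishes K m := by
  intro z hz
  obtain ⟨w, hw⟩ := hE m (MTensor.map ι z) (by rw [← MTensor.map_lmap, hz, map_zero])
  obtain ⟨v, hv⟩ := hM (MTensor.map ε w) <| by
    rw [← MTensor.map_lmap, hw, MTensor.map_map, hιε.linearMap_comp_eq_zero,
      MTensor.map_zero_linearMap]
    rfl
  obtain ⟨v, rfl⟩ := MTensor.map_surjective hε v
  obtain ⟨u, hu⟩ := (MTensor.map_exact_pi hιε (w - MTensor.lmap (F.δ (m + 2)) v)).1 <| by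
    rw [map_sub, MTensor.map_lmap, hv, sub_self]
  refine ⟨u, MTensor.map_injective_pi hι ?_⟩
  rw [MTensor.map_lmap, hu, map_sub, MTensor.lmap_lmap, F.δ_comp_δ, MTensor.lmap_zero]
  exact (sub_zero _).trans hw

theorem extVanishes_of_injective (W : Type u) [AddCommGroup W] [Module S W]
    [Module.Injective S W] (m : ℕ) : F.ExtVanishes W m := fun φ hφ =>
  Module.Injective.exists_comp_eq_of_ker_le (F.δ m) φ fun x hx => by
    obtain ⟨y, rfl⟩ := (F.exact_δ m x).1 hx
    exact LinearMap.congr_fun hφ y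

theorem extVanishes_succ {W E : Type u} [AddCommGroup W] [Module S W] [AddCommGroup E]
    [Module S E] [Module.Injective S E] {f : W →ₗ[S] E} (hf : Function.Injective f) {m : ℕ}
    (h : F.ExtVanishes (E ⧸ LinearMap.range f) m) : F.ExtVanishes W (m + 1) := by
  intro φ hφ
  obtain ⟨ψ, hψ⟩ := F.extVanishes_of_injective E (m + 1) (f ∘ₗ φ) <| by
    rw [LinearMap.comp_assoc, hφ, LinearMap.comp_zero]
  let q := (LinearMap.range f).mkQ
  have hqf : q ∘ₗ f = 0 := LinearMap.range_le_ker_iff.1 (Submodule.ker_mkQ _).ge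
  obtain ⟨χ, hχ⟩ := h (q ∘ₗ ψ) <| by
    rw [LinearMap.comp_assoc, hψ, ← LinearMap.comp_assoc, hqf, LinearMap.zero_comp]
  obtain ⟨χ', hχ'⟩ := Module.projective_lifting_property q χ (Submodule.mkQ_surjective _)
  obtain ⟨β, hβ⟩ := LinearMap.exists_comp_eq_of_range_le hf (ψ - χ' ∘ₗ F.δ m) <| by
    rw [← Submodule.ker_mkQ (LinearMap.range f), LinearMap.range_le_ker_iff,
      LinearMap.comp_sub, ← LinearMap.comp_assoc, hχ', hχ, sub_self]
  refine ⟨β, (LinearMap.cancel_left hf).1 ?_⟩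
  rw [← LinearMap.comp_assoc, hβ, LinearMap.sub_comp, hψ, LinearMap.comp_assoc, F.δ_comp_δ,
    LinearMap.comp_zero, sub_zero]

theorem extVanishes_of_injDimLE {n : ℕ} :
    ∀ {W : Type u} [AddCommGroup W] [Module S W], InjDimLE S W n → ∀ {m}, n ≤ m →
      F.ExtVanishes W m := by
  induction n with
  | zero =>
    intro W _ _ hW m _
    have : Module.Injective S W := hW
    exact F.extVanishes_of_injective W m
  | succ n ih =>
    intro W _ _ ⟨e, hE, hW⟩ m hm
    have : Module.Injective S e.E := hE
    obtain ⟨m, rfl⟩ : ∃ m', m = m' + 1 := ⟨m - 1, by omega⟩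
    exact F.extVanishes_succ e.inj (ih hW (by omega))

theorem torVanishes_hom_of_extVanishes {R : Type u} [Ring R] {T : Type u} [AddCommGroup T]
    [Module S T] [Module Rᵐᵒᵖ T] [SMulCommClass S Rᵐᵒᵖ T] {I : Type u} [AddCommGroup I]
    [Module Rᵐᵒᵖ I] [Module.Injective Rᵐᵒᵖ I] {m : ℕ} (hT : F.ExtVanishes T m) :
    F.TorVanishes (T →ₗ[Rᵐᵒᵖ] I) m := by
  intro y hy
  let δdual := LinearMap.lcomp Rᵐᵒᵖ T (F.δ (m + 1))
  obtain ⟨Ψ, hΨ⟩ := Module.Injective.exists_comp_eq_of_ker_le δdual (MTensor.tensorEval y) <| by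
    intro φ hφ
    obtain ⟨ψ, rfl⟩ := hT φ hφ
    change MTensor.tensorEval y (LinearMap.lcomp Rᵐᵒᵖ T (F.δ m) ψ) = 0
    rw [← LinearMap.comp_apply, ← MTensor.tensorEval_lmap, hy, map_zero, LinearMap.zero_apply]
  obtain ⟨w, rfl⟩ := MTensor.tensorEval_surjective Ψ
  exact ⟨w, MTensor.tensorEval_injective (by rw [MTensor.tensorEval_lmap, hΨ])⟩

end FinFreeResolution

theorem flatDimLE_of_forall_torVanishes {S : Type u} [Ring S] (hS : IsLeftCoherentRing S)
    (n : ℕ) : ∀ (M : Type u) [AddCommGroup M] [Module Sᵐᵒᵖ M],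
      (∀ J : Ideal S, J.FG → ∀ F : FinFreeResolution S J, F.TorVanishes M n) →
      FlatDimLE S M n := by
  induction n with
  | zero =>
    intro M _ _ hM
    exact isFlatRightModule_of_forall_fg_ideal fun J hJ =>
      let F := (FinFreeResolution.nonempty hS hJ).some
      F.injective_lmap_subtype_of_torVanishes_zero (hM J hJ F)
  | succ n ih =>
    intro M _ _ hM
    let ε := Finsupp.linearCombination Sᵐᵒᵖ (id : M → M)
    have hε : Function.Surjective ε :=
      Finsupp.linearCombination_surjective Sᵐᵒᵖ Function.surjective_id
    refine ⟨⟨ModuleCat.of Sᵐᵒᵖ (M →₀ Sᵐᵒᵖ), ε, hε⟩, MTensor.isFlatRightModule_finsupp,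
      ih _ fun J hJ F => ?_⟩
    exact F.torVanishes_of_exact (LinearMap.ker ε).injective_subtype hε
      (LinearMap.exact_subtype_ker_map ε) (F.torVanishes_finsupp _) (hM J hJ F)

/-- If `S` is left coherent and `T` is an `(S,R)`-bimodule, then for every
injective right `R`-module `I`, the flat dimension of the right `S`-module `Hom_R(T, I)` is
at most the injective dimension of `_S T`. -/
theorem flatDim_hom_injective_le
    (S R : Type u) [Ring S] [Ring R]
    (T : Type u) [AddCommGroup T] [Module S T] [Module Rᵐᵒᵖ T] [SMulCommClass S Rᵐᵒᵖ T]
    (hScoh : IsLeftCoherentRing S)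
    (I : Type u) [AddCommGroup I] [Module Rᵐᵒᵖ I] (hI : Module.Injective Rᵐᵒᵖ I)
    (n : ℕ) (hT : InjDimLE S T n) :
    FlatDimLE S (T →ₗ[Rᵐᵒᵖ] I) n :=
  flatDimLE_of_forall_torVanishes hScoh n _ fun _ _ F =>
    F.torVanishes_hom_of_extVanishes (F.extVanishes_of_injDimLE hT le_rfl)
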